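/- arXiv:2605.15552 — 2 statements merged into one kernel-verified Lean document; each statement's English description precedes it below -/
import Mathlib

section
/- Uniqueness of the minimal levelled tree-automaton representation: if two TIDDs $M_1$ and $M_2$ (levelled deterministic bottom-up tree automata over perfect binary assignment trees, satisfying the distinguishability condition that any two distinct states at the same level are separated by the transition function, and with value functions that are injective onto the codomain) compute the same function $g : \{0,1\}^{2^l} \to D$, then at every level $j$ the states of $M_1$ and the states of $M_2$ are in bijection, with corresponding states having equal down-assignment languages (sets of length-$2^j$ strings reaching that state). -/
/-- A levelled deterministic bottom-up tree automaton over perfect binary assignment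
trees: state sets `Q j` for each level, an assignment of each bit to a level-0 state,
and transition functions `δ j : Q j × Q j → Q (j+1)`. -/
structure TIDD where
  Q : ℕ → Type
  ι : Bool → Q 0
  δ : ∀ j, Q j → Q j → Q (j + 1)

/-- The run of a TIDD on a binary string of length `2^j`, by recursive halving. -/
def TIDD.run (M : TIDD) : (j : ℕ) → List Bool → M.Q j
  | 0, w => M.ι (w.headD false)
  | j + 1, w => M.δ j (M.run j (w.take (2 ^ j))) (M.run j (w.drop (2 ^ j)))

/-- The down-assignment language of a state `q` at level `j`: the set of strings of
length `2^j` whose run reaches `q`. -/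
def TIDD.Ldown (M : TIDD) (j : ℕ) (q : M.Q j) : Set (List Bool) :=
  {w | w.length = 2 ^ j ∧ M.run j w = q}

/-! At a level `j` where every state is reachable, the states of a TIDD are the classes of the
relation "same run" on strings of length `2^j`. Distinguishability pushes an inclusion between
these relations for two TIDDs down from level `j+1` to level `j`: if `M` merges two strings that
`N` separates, a context `p` separating their `N`-states extends them to strings of length
`2^(j+1)` that `M` still merges but `N` separates. At level `l` both relations are the kernel of
`g`, so by downward induction they coincide at every level `j ≤ l`. -/

namespace TIDD

lemma length_append_eq_two_pow_succ {w u : List Bool} {j : ℕ} (hw : w.length = 2 ^ j)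
    (hu : u.length = 2 ^ j) : (w ++ u).length = 2 ^ (j + 1) := by
  rw [List.length_append, hw, hu, pow_succ, mul_two]

lemma run_append (M : TIDD) (j : ℕ) {w : List Bool} (u : List Bool) (hw : w.length = 2 ^ j) :
    M.run (j + 1) (w ++ u) = M.δ j (M.run j w) (M.run j u) := by
  rw [TIDD.run, ← hw, List.take_left, List.drop_left]

lemma Ldown_nonempty (M : TIDD) {l : ℕ} (hι : Function.Surjective M.ι)
    (hδ : ∀ j, j < l → Function.Surjective (fun p : M.Q j × M.Q j => M.δ j p.1 p.2))
    {j : ℕ} (hj : j ≤ l) (q : M.Q j) : (M.Ldown j q).Nonempty := by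
  induction j with
  | zero =>
    obtain ⟨b, rfl⟩ := hι q
    exact ⟨[b], rfl, rfl⟩
  | succ j ih =>
    obtain ⟨⟨q₁, q₂⟩, rfl⟩ := hδ j hj q
    obtain ⟨w₁, hw₁, rfl⟩ := ih (by omega) q₁
    obtain ⟨w₂, hw₂, rfl⟩ := ih (by omega) q₂
    exact ⟨w₁ ++ w₂, length_append_eq_two_pow_succ hw₁ hw₂, run_append M j w₂ hw₁⟩

def Refines (M N : TIDD) (j : ℕ) : Prop :=
  ∀ w w' : List Bool, w.length = 2 ^ j → w'.length = 2 ^ j →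
    M.run j w = M.run j w' → N.run j w = N.run j w'

lemma Refines.of_value_eq {D : Type*} {M N : TIDD} {l : ℕ} {V₁ : M.Q l → D}
    {V₂ : N.Q l → D} (hV₂ : Function.Injective V₂)
    (hsame : ∀ w : List Bool, w.length = 2 ^ l → V₁ (M.run l w) = V₂ (N.run l w)) :
    Refines M N l := fun w w' hw hw' h =>
  hV₂ (by rw [← hsame w hw, ← hsame w' hw', h])

lemma Refines.of_succ {M N : TIDD} {j : ℕ} (hN : ∀ q : N.Q j, (N.Ldown j q).Nonempty)
    (hd : ∀ q q' : N.Q j, q ≠ q' →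
      ∃ p : N.Q j, N.δ j q p ≠ N.δ j q' p ∨ N.δ j p q ≠ N.δ j p q')
    (h : Refines M N (j + 1)) : Refines M N j := by
  intro w w' hw hw' hM
  by_contra hne
  obtain ⟨p, hp⟩ := hd _ _ hne
  obtain ⟨u, hu, rfl⟩ := hN p
  rcases hp with hp | hp
  · have hN' := h (w ++ u) (w' ++ u) (length_append_eq_two_pow_succ hw hu)
      (length_append_eq_two_pow_succ hw' hu)
      (by rw [run_append M j u hw, run_append M j u hw', hM])
    rw [run_append N j u hw, run_append N j u hw'] at hN'
    exact hp hN'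
  · have hN' := h (u ++ w) (u ++ w') (length_append_eq_two_pow_succ hu hw)
      (length_append_eq_two_pow_succ hu hw')
      (by rw [run_append M j w hu, run_append M j w' hu, hM])
    rw [run_append N j w hu, run_append N j w' hu] at hN'
    exact hp hN'

lemma Refines.of_le {M N : TIDD} {l : ℕ}
    (hN : ∀ j, j ≤ l → ∀ q : N.Q j, (N.Ldown j q).Nonempty)
    (hd : ∀ j, j < l → ∀ q q' : N.Q j, q ≠ q' →
      ∃ p : N.Q j, N.δ j q p ≠ N.δ j q' p ∨ N.δ j p q ≠ N.δ j p q')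
    (h : Refines M N l) {j : ℕ} (hj : j ≤ l) : Refines M N j := by
  induction hj using Nat.decreasingInduction with
  | self => exact h
  | of_succ k hk ih => exact ih.of_succ (hN k hk.le) (hd k hk)

lemma exists_equiv_Ldown_eq {M N : TIDD} {j : ℕ} (hM : ∀ q : M.Q j, (M.Ldown j q).Nonempty)
    (hN : ∀ q : N.Q j, (N.Ldown j q).Nonempty) (hMN : Refines M N j) (hNM : Refines N M j) :
    ∃ e : M.Q j ≃ N.Q j, ∀ q : M.Q j, M.Ldown j q = N.Ldown j (e q) := by
  choose v hv using hM
  choose u hu using hN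
  have hLdown : ∀ q w, w ∈ M.Ldown j q ↔ w ∈ N.Ldown j (N.run j (v q)) := by
    intro q w
    exact ⟨fun ⟨hw, hq⟩ => ⟨hw, hMN w (v q) hw (hv q).1 (hq.trans (hv q).2.symm)⟩,
      fun ⟨hw, hq⟩ => ⟨hw, (hNM w (v q) hw (hv q).1 hq).trans (hv q).2⟩⟩
  refine ⟨⟨fun q => N.run j (v q), fun r => M.run j (u r), fun q => ?_, fun r => ?_⟩,
    fun q => Set.ext (hLdown q)⟩
  · exact ((hLdown q (u _)).2 (hu _)).2
  · exact (hMN _ _ (hu r).1 (hv _).1 (hv _).2.symm).symm.trans (hu r).2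

end TIDD

/-- Uniqueness of the minimal levelled tree-automaton representation: if two TIDDs
(with all states arising from the construction, satisfying the distinguishability
condition, and with injective value maps) compute the same function
`g : {0,1}^{2^l} → D`, then at every level `j ≤ l` their state sets are in bijection,
with corresponding states having equal down-assignment languages. -/
theorem tidd_canonicity {D : Type*} (l : ℕ) (M₁ M₂ : TIDD)
    (V₁ : M₁.Q l → D) (V₂ : M₂.Q l → D)
    (hV₁ : Function.Injective V₁) (hV₂ : Function.Injective V₂)
    -- every state arises from the construction (conditions 2(ii),(iii) of the TIDD def)
    (hι₁ : Function.Surjective M₁.ι) (hι₂ : Function.Surjective M₂.ι)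
    (hδ₁ : ∀ j, j < l → Function.Surjective (fun p : M₁.Q j × M₁.Q j => M₁.δ j p.1 p.2))
    (hδ₂ : ∀ j, j < l → Function.Surjective (fun p : M₂.Q j × M₂.Q j => M₂.δ j p.1 p.2))
    -- distinguishability
    (hd₁ : ∀ j, j < l → ∀ q q' : M₁.Q j, q ≠ q' →
      ∃ p : M₁.Q j, M₁.δ j q p ≠ M₁.δ j q' p ∨ M₁.δ j p q ≠ M₁.δ j p q')
    (hd₂ : ∀ j, j < l → ∀ q q' : M₂.Q j, q ≠ q' →
      ∃ p : M₂.Q j, M₂.δ j q p ≠ M₂.δ j q' p ∨ M₂.δ j p q ≠ M₂.δ j p q')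
    -- the two TIDDs compute the same function
    (hsame : ∀ w : List Bool, w.length = 2 ^ l → V₁ (M₁.run l w) = V₂ (M₂.run l w)) :
    ∀ j, j ≤ l → ∃ e : M₁.Q j ≃ M₂.Q j,
      ∀ q : M₁.Q j, M₁.Ldown j q = M₂.Ldown j (e q) := by
  intro j hj
  have reach₁ : ∀ k ≤ l, ∀ q : M₁.Q k, (M₁.Ldown k q).Nonempty :=
    fun _ hk => M₁.Ldown_nonempty hι₁ hδ₁ hk
  have reach₂ : ∀ k ≤ l, ∀ q : M₂.Q k, (M₂.Ldown k q).Nonempty :=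
    fun _ hk => M₂.Ldown_nonempty hι₂ hδ₂ hk
  have h₁₂ := (TIDD.Refines.of_value_eq hV₂ hsame).of_le reach₂ hd₂ hj
  have h₂₁ :=
    (TIDD.Refines.of_value_eq hV₁ fun w hw => (hsame w hw).symm).of_le reach₁ hd₁ hj
  exact TIDD.exists_equiv_Ldown_eq (reach₁ j hj) (reach₂ j hj) h₁₂ h₂₁
end

section
/- Lower bound on TIDD size for the anti-diagonal function: let $n = 2^m$ and define $h_n : \{0,1\}^{n^2} \to \{0,1\}$ by $h_n(x) = 1$ iff for every $i \in \{0,\ldots,n-1\}$, the bit $x_{i \cdot n + (n-1-i)} = 0$. Then any TIDD computing $h_n$ under the variable ordering $x_0, \ldots, x_{n^2-1}$ has at least $2^n$ states at level $m = \log_2 n$ (the level corresponding to blocks of length $n$). -/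
/-- The anti-diagonal function `h_n` on row-major flattenings of `n × n` Boolean
matrices: `h_n x = 1` iff `x_{i·n + (n-1-i)} = 0` for all `0 ≤ i < n`. -/
def antiDiag (n : ℕ) (x : List Bool) : Bool :=
  decide (∀ i < n, x.getD (i * n + (n - 1 - i)) false = false)

/-!
The run at level `2m` on an `n × n` matrix (`n = 2^m`) depends only on the level-`m` states
of its `n` rows. If two rows `u ≠ v`, differing at position `p`, reached the same level-`m`
state, then the matrices carrying `u`, resp. `v`, in row `n - 1 - p` and zeros elsewhere would
reach the same final state; but their only anti-diagonal entries are `u p` and `v p`, so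
`h_n` separates them. Hence `u ↦` (level-`m` state of `u`) is injective on `{0,1}^n`.
-/

namespace TIDD

variable (M : TIDD)

theorem run_take_two_pow : ∀ (j : ℕ) (w : List Bool), M.run j (w.take (2 ^ j)) = M.run j w
  | 0, w => by cases w <;> rfl
  | j + 1, w => by
    have h2 : 2 ^ (j + 1) = 2 ^ j + 2 ^ j := by ring
    simp only [run, List.take_take, h2, List.drop_take, Nat.add_sub_cancel, min_eq_left
      (Nat.le_add_right _ _), run_take_two_pow j]

theorem run_take_of_le {j s : ℕ} (h : 2 ^ j ≤ s) (w : List Bool) :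
    M.run j (w.take s) = M.run j w := by
  rw [← run_take_two_pow, List.take_take, min_eq_left h, run_take_two_pow]

theorem run_add_congr (m : ℕ) : ∀ (k : ℕ) {w w' : List Bool},
    (∀ t < 2 ^ k, M.run m (w.drop (t * 2 ^ m)) = M.run m (w'.drop (t * 2 ^ m))) →
    M.run (m + k) w = M.run (m + k) w'
  | 0, w, w', h => by simpa using h 0 one_pos
  | k + 1, w, w', h => by
    have hsplit : 2 ^ (m + k) = 2 ^ k * 2 ^ m := by rw [pow_add, mul_comm]
    show M.run (m + k + 1) w = M.run (m + k + 1) w'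
    refine congrArg₂ (M.δ (m + k)) (run_add_congr m k fun t ht => ?_)
      (run_add_congr m k fun t ht => ?_)
    · have hblock : t * 2 ^ m + 2 ^ m ≤ 2 ^ (m + k) := by
        rw [hsplit, ← Nat.succ_mul]; exact Nat.mul_le_mul_right _ ht
      rw [List.drop_take, M.run_take_of_le (Nat.le_sub_of_add_le' hblock), List.drop_take,
        M.run_take_of_le (Nat.le_sub_of_add_le' hblock)]
      exact h t (ht.trans (Nat.pow_lt_pow_succ one_lt_two))
    · have hshift : 2 ^ (m + k) + t * 2 ^ m = (2 ^ k + t) * 2 ^ m := by rw [hsplit, add_mul]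
      rw [List.drop_drop, List.drop_drop, hshift]
      exact h (2 ^ k + t) (by rw [pow_succ]; omega)

end TIDD

def rowMajor {r c : ℕ} (A : Fin r → Fin c → Bool) : List Bool :=
  List.ofFn fun k : Fin (r * c) => A k.divNat k.modNat

section rowMajor

variable {r c : ℕ} (A : Fin r → Fin c → Bool)

@[simp]
theorem length_rowMajor : (rowMajor A).length = r * c := List.length_ofFn

theorem getElem_rowMajor {t j : ℕ} (ht : t < r) (hj : j < c) :
    (rowMajor A)[t * c + j]'(by simpa [mul_comm t] using Nat.mul_add_lt_mul_of_lt_of_lt ht hj) =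
      A ⟨t, ht⟩ ⟨j, hj⟩ := by
  have hdiv : (t * c + j) / c = t := by
    rw [add_comm, Nat.add_mul_div_right _ _ (by omega), Nat.div_eq_of_lt hj, zero_add]
  have hmod : (t * c + j) % c = j := by rw [Nat.mul_add_mod_of_lt hj]
  simp only [rowMajor, List.getElem_ofFn]
  congr 1 <;> ext <;> simp [hdiv, hmod]

theorem getD_rowMajor (t : Fin r) (j : Fin c) : (rowMajor A).getD (t * c + j) false = A t j := by
  have hlt : t * c + j < r * c := by
    simpa [mul_comm (t : ℕ)] using Nat.mul_add_lt_mul_of_lt_of_lt t.2 j.2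
  rw [List.getD_eq_getElem _ _ (by simpa using hlt), getElem_rowMajor]

theorem take_drop_rowMajor (t : Fin r) : ((rowMajor A).drop (t * c)).take c = List.ofFn (A t) := by
  have hlen : t * c + c ≤ r * c := by rw [← Nat.succ_mul]; exact Nat.mul_le_mul_right _ t.2
  refine List.ext_getElem (by simp; omega) fun j hj _ => ?_
  simp only [List.getElem_take, List.getElem_drop, List.getElem_ofFn]
  exact getElem_rowMajor A t.2 (by simp at hj; omega)

end rowMajor

theorem TIDD.run_rowMajor_congr (M : TIDD) {m k : ℕ} {A B : Fin (2 ^ k) → Fin (2 ^ m) → Bool}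
    (h : ∀ t, M.run m (List.ofFn (A t)) = M.run m (List.ofFn (B t))) :
    M.run (m + k) (rowMajor A) = M.run (m + k) (rowMajor B) := by
  refine M.run_add_congr m k fun t ht => ?_
  rw [← M.run_take_two_pow m, ← M.run_take_two_pow m (List.drop _ (rowMajor B))]
  have hA := take_drop_rowMajor A ⟨t, ht⟩
  have hB := take_drop_rowMajor B ⟨t, ht⟩
  simp only at hA hB
  rw [hA, hB]
  exact h _

def singleRow {n : ℕ} (i : Fin n) (u : Fin n → Bool) : Fin n → Fin n → Bool :=
  Function.update (fun _ _ => false) i u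

theorem antiDiag_rowMajor_singleRow {n : ℕ} (p : Fin n) (u : Fin n → Bool) :
    antiDiag n (rowMajor (singleRow p.rev u)) = !u p := by
  have hentry (t : Fin n) : (rowMajor (singleRow p.rev u)).getD (t * n + (n - 1 - t)) false =
      singleRow p.rev u t t.rev := by
    rw [show n - 1 - t = t.rev by rw [Fin.val_rev]; omega]
    exact getD_rowMajor _ t t.rev
  rw [antiDiag, Bool.eq_iff_iff, decide_eq_true_iff, Bool.not_eq_true']
  constructor
  · intro h
    simpa [singleRow] using (hentry p.rev).symm.trans (h p.rev p.rev.2)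
  · intro hp t ht
    refine (hentry ⟨t, ht⟩).trans ?_
    by_cases hrow : (⟨t, ht⟩ : Fin n) = p.rev
    · simpa [singleRow, hrow] using hp
    · simp [singleRow, hrow]

theorem tidd_antidiag_lower_bound_general (m : ℕ) (M : TIDD) [∀ j, Fintype (M.Q j)]
    (V : M.Q (2 * m) → Bool)
    (hcomputes : ∀ x : List Bool, x.length = 2 ^ m * 2 ^ m →
      V (M.run (2 * m) x) = antiDiag (2 ^ m) x) :
    2 ^ (2 ^ m) ≤ Fintype.card (M.Q m) := by
  have hinj : Function.Injective fun u : Fin (2 ^ m) → Bool => M.run m (List.ofFn u) := by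
    intro u v huv
    funext p
    have hrows (t : Fin (2 ^ m)) : M.run m (List.ofFn (singleRow p.rev u t)) =
        M.run m (List.ofFn (singleRow p.rev v t)) := by
      by_cases ht : t = p.rev
      · simpa [singleRow, ht] using huv
      · simp [singleRow, ht]
    have hruns := M.run_rowMajor_congr hrows
    rw [← two_mul] at hruns
    have hvals := congrArg V hruns
    rw [hcomputes _ (length_rowMajor _), hcomputes _ (length_rowMajor _),
      antiDiag_rowMajor_singleRow, antiDiag_rowMajor_singleRow] at hvals
    exact Bool.not_inj hvals
  simpa using Fintype.card_le_of_injective _ hinj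

/-- Lower bound on TIDD size for the anti-diagonal function: with `n = 2^m`, any TIDD
computing `h_n` under the variable ordering `x_0, …, x_{n²-1}` has at least `2^n`
states at level `m` (the level of blocks of length `n`). -/
theorem tidd_antidiag_lower_bound (m : ℕ) (M : TIDD) [∀ j, Fintype (M.Q j)]
    (V : M.Q (2 * m) → Bool) (hV : Function.Injective V)
    (hcomputes : ∀ x : List Bool, x.length = 2 ^ m * 2 ^ m →
      V (M.run (2 * m) x) = antiDiag (2 ^ m) x) :
    2 ^ (2 ^ m) ≤ Fintype.card (M.Q m) :=
  tidd_antidiag_lower_bound_general m M V hcomputes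
end
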